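/- arXiv:0902.0127 — 3 statements merged into one kernel-verified Lean document; each statement's English description precedes it below -/
import Mathlib

section
/- A connected 4-regular graph with a framing (a pairing of the four half-edges at each vertex into two opposite pairs) admits a source-sink orientation if and only if the associated orientation-double-cover condition holds; equivalently, admitting a source-sink orientation is preserved under smoothing at a vertex followed by un-smoothing. -/
/-- A framed 4-valent graph, encoded by its darts (half-edges): `edgeInv`
pairs the two darts of each edge, `opp` pairs each dart with the opposite
dart at the same vertex, and every vertex carries exactly four darts. -/
structure FramedFourGraph where
  /-- darts (half-edges) -/
  D : Type
  /-- vertices -/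
  V : Type
  [fintypeD : Fintype D]
  [decD : DecidableEq D]
  [decV : DecidableEq V]
  /-- the other dart of the same edge -/
  edgeInv : D → D
  /-- the opposite dart at the same vertex -/
  opp : D → D
  /-- the vertex a dart is attached to -/
  vtx : D → V
  edgeInv_invol : ∀ d, edgeInv (edgeInv d) = d
  edgeInv_ne : ∀ d, edgeInv d ≠ d
  opp_invol : ∀ d, opp (opp d) = d
  opp_ne : ∀ d, opp d ≠ d
  vtx_opp : ∀ d, vtx (opp d) = vtx d
  fourValent : ∀ d : D, (Finset.univ.filter fun d' => vtx d' = vtx d).card = 4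

attribute [instance] FramedFourGraph.fintypeD FramedFourGraph.decD FramedFourGraph.decV

/-- A source-sink orientation: each edge is oriented (the two darts of an edge
get opposite in/out status), and at every vertex one opposite pair of darts is
outgoing while the other opposite pair is incoming. -/
def FramedFourGraph.AdmitsSourceSink (G : FramedFourGraph) : Prop :=
  ∃ o : G.D → Bool,
    (∀ d, o (G.edgeInv d) = ! o d) ∧
    (∀ d, o (G.opp d) = o d) ∧
    (∀ d d', G.vtx d' = G.vtx d → d' ≠ d → d' ≠ G.opp d → o d' = ! o d)

/-- One step in the orientation double cover: the fiber coordinate flips when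
passing to the other dart of an edge and when passing to a non-opposite dart
at the same vertex, and is preserved when passing to the opposite dart. -/
def FramedFourGraph.Step (G : FramedFourGraph) (p q : G.D × Bool) : Prop :=
  (q.1 = G.edgeInv p.1 ∧ q.2 = ! p.2) ∨
  (q.1 = G.opp p.1 ∧ q.2 = p.2) ∨
  (G.vtx q.1 = G.vtx p.1 ∧ q.1 ≠ p.1 ∧ q.1 ≠ G.opp p.1 ∧ q.2 = ! p.2)

/-- The orientation-double-cover condition: the double cover splits, i.e. no
point of the cover is connected to the point with the opposite fiber
coordinate over the same dart. -/
def FramedFourGraph.DoubleCoverSplits (G : FramedFourGraph) : Prop :=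
  ∀ (d : G.D) (s : Bool), ¬ Relation.ReflTransGen G.Step (d, s) (d, ! s)

/-!
A source-sink orientation `o` is the same thing as a section of the orientation double cover:
every step of the cover preserves `s xor o d`, so no fiber is joined to itself and the cover
splits. Conversely, if the cover splits and the graph is connected, the component of
`(d₀, true)` meets each fiber `{d} × Bool` in exactly one point, and its fiber coordinate is a
source-sink orientation.
-/

open Relation

namespace FramedFourGraph

variable (G : FramedFourGraph)

def Adj (a b : G.D) : Prop := G.vtx a = G.vtx b ∨ b = G.edgeInv a

def IsSourceSink (o : G.D → Bool) : Prop :=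
  (∀ d, o (G.edgeInv d) = ! o d) ∧
  (∀ d, o (G.opp d) = o d) ∧
  (∀ d d', G.vtx d' = G.vtx d → d' ≠ d → d' ≠ G.opp d → o d' = ! o d)

theorem admitsSourceSink_iff : G.AdmitsSourceSink ↔ ∃ o, G.IsSourceSink o := Iff.rfl

instance : Std.Symm G.Step where
  symm := by
    rintro p q (⟨hq, hs⟩ | ⟨hq, hs⟩ | ⟨hv, hne, hopp, hs⟩)
    · exact Or.inl ⟨by rw [hq, G.edgeInv_invol], by rw [hs, Bool.not_not]⟩
    · exact Or.inr (Or.inl ⟨by rw [hq, G.opp_invol], hs.symm⟩)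
    · refine Or.inr (Or.inr ⟨hv.symm, Ne.symm hne, fun h => hopp ?_, by rw [hs, Bool.not_not]⟩)
      rw [h, G.opp_invol]

variable {G}

theorem IsSourceSink.xor_eq_of_step {o : G.D → Bool} (ho : G.IsSourceSink o)
    {p q : G.D × Bool} (h : G.Step p q) : xor q.2 (o q.1) = xor p.2 (o p.1) := by
  obtain ⟨h_edge, h_opp, h_adj⟩ := ho
  rcases h with ⟨hq, hs⟩ | ⟨hq, hs⟩ | ⟨hv, hne, hopp, hs⟩
  · rw [hq, hs, h_edge, Bool.not_xor_not]
  · rw [hq, hs, h_opp]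
  · rw [hs, h_adj _ _ hv hne hopp, Bool.not_xor_not]

theorem IsSourceSink.xor_eq_of_reflTransGen {o : G.D → Bool} (ho : G.IsSourceSink o)
    {p q : G.D × Bool} (h : ReflTransGen G.Step p q) : xor q.2 (o q.1) = xor p.2 (o p.1) := by
  induction h with
  | refl => rfl
  | tail _ hstep ih => exact (ho.xor_eq_of_step hstep).trans ih

theorem doubleCoverSplits_of_admitsSourceSink (h : G.AdmitsSourceSink) :
    G.DoubleCoverSplits := by
  rintro d s hreach
  obtain ⟨o, ho⟩ := G.admitsSourceSink_iff.mp h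
  simpa using ho.xor_eq_of_reflTransGen hreach

theorem exists_reflTransGen_step_of_adj {a b : G.D} (h : G.Adj a b) (s : Bool) :
    ∃ s', ReflTransGen G.Step (a, s) (b, s') := by
  rcases h with hv | rfl
  · by_cases hba : b = a
    · exact ⟨s, hba ▸ .refl⟩
    by_cases hopp : b = G.opp a
    · exact ⟨s, .single (Or.inr (Or.inl ⟨hopp, rfl⟩))⟩
    · exact ⟨!s, .single (Or.inr (Or.inr ⟨hv.symm, hba, hopp, rfl⟩))⟩
  · exact ⟨!s, .single (Or.inl ⟨rfl, rfl⟩)⟩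

theorem exists_reflTransGen_step_of_reflTransGen_adj {a b : G.D} (h : ReflTransGen G.Adj a b)
    (s : Bool) : ∃ s', ReflTransGen G.Step (a, s) (b, s') := by
  induction h with
  | refl => exact ⟨s, .refl⟩
  | tail _ hbc ih =>
    obtain ⟨s', hs'⟩ := ih
    obtain ⟨s'', hs''⟩ := exists_reflTransGen_step_of_adj hbc s'
    exact ⟨s'', hs'.trans hs''⟩

theorem DoubleCoverSplits.eq_of_reflTransGen (hsplit : G.DoubleCoverSplits) {p : G.D × Bool}
    {d : G.D} {s s' : Bool} (hs : ReflTransGen G.Step p (d, s))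
    (hs' : ReflTransGen G.Step p (d, s')) : s = s' := by
  by_contra hne
  rw [Bool.eq_not_iff.mpr (Ne.symm hne)] at hs'
  exact hsplit d s ((Std.Symm.symm _ _ hs).trans hs')

open Classical in
theorem DoubleCoverSplits.isSourceSink (hsplit : G.DoubleCoverSplits)
    (hconn : ∀ d d', ReflTransGen G.Adj d d') (d₀ : G.D) :
    G.IsSourceSink fun d => decide (ReflTransGen G.Step (d₀, true) (d, true)) := by
  set o : G.D → Bool := fun d => decide (ReflTransGen G.Step (d₀, true) (d, true))
  have eq_of_reach {d s} (h : ReflTransGen G.Step (d₀, true) (d, s)) : o d = s := by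
    cases s
    · exact decide_eq_false fun h' => Bool.false_ne_true (hsplit.eq_of_reflTransGen h h')
    · exact decide_eq_true h
  have reach (d : G.D) : ReflTransGen G.Step (d₀, true) (d, o d) := by
    obtain ⟨s, hs⟩ := exists_reflTransGen_step_of_reflTransGen_adj (hconn d₀ d) true
    rwa [eq_of_reach hs]
  refine ⟨fun d => ?_, fun d => ?_, fun d d' hv hne hopp => ?_⟩
  · exact eq_of_reach ((reach d).tail (Or.inl ⟨rfl, rfl⟩))
  · exact eq_of_reach ((reach d).tail (Or.inr (Or.inl ⟨rfl, rfl⟩)))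
  · exact eq_of_reach ((reach d).tail (Or.inr (Or.inr ⟨hv, hne, hopp, rfl⟩)))

theorem admitsSourceSink_of_doubleCoverSplits (hconn : ∀ d d', ReflTransGen G.Adj d d')
    (hsplit : G.DoubleCoverSplits) : G.AdmitsSourceSink := by
  cases isEmpty_or_nonempty G.D with
  | inl _ => exact ⟨isEmptyElim, isEmptyElim, isEmptyElim, fun d => isEmptyElim d⟩
  | inr h => exact G.admitsSourceSink_iff.mpr ⟨_, hsplit.isSourceSink hconn h.some⟩

end FramedFourGraph

/-- A connected framed 4-regular graph admits a source-sink
orientation if and only if the orientation-double-cover condition holds. -/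
theorem stmt4 (G : FramedFourGraph)
    (hconn : ∀ d d' : G.D,
      Relation.ReflTransGen (fun a b => G.vtx a = G.vtx b ∨ b = G.edgeInv a) d d') :
    G.AdmitsSourceSink ↔ G.DoubleCoverSplits :=
  ⟨FramedFourGraph.doubleCoverSplits_of_admitsSourceSink,
    FramedFourGraph.admitsSourceSink_of_doubleCoverSplits hconn⟩
end

section
/- A Gauss diagram (chord diagram of a closed curve) corresponds to a framed 4-graph admitting a source-sink orientation if and only if every chord of the diagram is even (linked with an even number of other chords). -/
lemma even_card_invol {α : Type*} [DecidableEq α] (f : α → α) (s : Finset α)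
    (hmem : ∀ a ∈ s, f a ∈ s) (hinv : ∀ a ∈ s, f (f a) = a)
    (hfpf : ∀ a ∈ s, f a ≠ a) : Even s.card := by
  induction s using Finset.strongInduction with
  | _ s ih =>
    rcases s.eq_empty_or_nonempty with rfl | ⟨a, ha⟩
    · simp
    · have hfa := hmem a ha
      have hne := hfpf a ha
      have hpair : ({a, f a} : Finset α) ⊆ s := by
        intro x hx; simp at hx; rcases hx with rfl | rfl <;> assumption
      have hss : s \ {a, f a} ⊂ s :=
        Finset.sdiff_ssubset hpair ⟨a, by simp⟩
      have hcard : s.card = (s \ {a, f a}).card + 2 := by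
        rw [Finset.card_sdiff_of_subset hpair]
        have h2 : ({a, f a} : Finset α).card = 2 := by
          rw [Finset.card_insert_of_notMem (by simpa using (Ne.symm hne)), Finset.card_singleton]
        rw [h2]
        have := Finset.card_le_card hpair
        omega
      have hmem' : ∀ b ∈ s \ {a, f a}, f b ∈ s \ {a, f a} := by
        intro b hb
        simp only [Finset.mem_sdiff, Finset.mem_insert, Finset.mem_singleton] at hb ⊢
        obtain ⟨hbs, hb'⟩ := hb
        push_neg at hb' ⊢
        refine ⟨hmem b hbs, ?_, ?_⟩
        · intro h; apply hb'.2; rw [← hinv b hbs, h]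
        · intro h
          have := congrArg f h
          rw [hinv b hbs, hinv a ha] at this
          exact hb'.1 this
      have hE := ih _ hss hmem' (fun b hb => hinv b (Finset.mem_sdiff.mp hb).1)
        (fun b hb => hfpf b (Finset.mem_sdiff.mp hb).1)
      rw [hcard]
      exact hE.add (by norm_num)

lemma odd_iff_cast2 (n : ℕ) : Odd n ↔ (n : ZMod 2) = 1 := by
  rw [Nat.odd_iff, ← ZMod.natCast_mod n 2]
  rcases Nat.mod_two_eq_zero_or_one n with h | h <;> rw [h] <;> simp

lemma cast2_eq_iff (n k : ℕ) : (n : ZMod 2) = (k : ZMod 2) ↔ n % 2 = k % 2 :=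
  ZMod.natCast_eq_natCast_iff' n k 2

lemma parity_sub_val {m : ℕ} [NeZero m] (hm : 2 ∣ m) (a b : ZMod m) :
    Odd ((a - b).val) ↔ ¬ (a.val % 2 = b.val % 2) := by
  have key : ∀ x : ZMod m, ((x.val : ZMod 2)) = ZMod.castHom hm (ZMod 2) x := by
    intro x; rw [ZMod.natCast_val, ZMod.castHom_apply]
  rw [odd_iff_cast2, key, map_sub, ← cast2_eq_iff, key a, key b]
  generalize (ZMod.castHom hm (ZMod 2)) a = x
  generalize (ZMod.castHom hm (ZMod 2)) b = y
  revert x y; decide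


/-- The point `j` lies strictly inside the arc running positively from `i`
to `σ i` on the circle `ZMod m` (the `m` points being endpoints of chords of
a Gauss diagram whose chord structure is the fixed-point-free involution `σ`). -/
def InsideArc (m : ℕ) (σ : ZMod m → ZMod m) (i j : ZMod m) : Prop :=
  j ≠ i ∧ (j - i).val < (σ i - i).val

instance (m : ℕ) (σ : ZMod m → ZMod m) (i j : ZMod m) :
    Decidable (InsideArc m σ i j) :=
  inferInstanceAs (Decidable (_ ∧ _))

/-- The number of chords linked with the chord through `i`: each linked chord
has exactly one endpoint strictly inside the arc from `i` to `σ i`, so we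
count the points `j` inside that arc whose partner `σ j` is outside. -/
def linkedCount (m : ℕ) [NeZero m] (σ : ZMod m → ZMod m) (i : ZMod m) : ℕ :=
  (Finset.univ.filter fun j => InsideArc m σ i j ∧ ¬ InsideArc m σ i (σ j)).card

lemma card_inside (m : ℕ) [NeZero m] (σ : ZMod m → ZMod m) (i : ZMod m) :
    (Finset.univ.filter (InsideArc m σ i)).card = (σ i - i).val - 1 := by
  rw [← Nat.card_Ico 1 ((σ i - i).val)]
  apply Finset.card_bij (fun j _ => (j - i).val)
  · intro j hj
    simp only [Finset.mem_filter, Finset.mem_univ, true_and] at hj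
    obtain ⟨hne, hlt⟩ := hj
    rw [Finset.mem_Ico]
    refine ⟨Nat.one_le_iff_ne_zero.mpr ?_, hlt⟩
    simp only [ne_eq, ZMod.val_eq_zero, sub_eq_zero]
    exact hne
  · intro a _ b _ h
    have h2 : a - i = b - i := by
      have := congrArg (Nat.cast : ℕ → ZMod m) h
      rwa [ZMod.natCast_val, ZMod.natCast_val, ZMod.cast_id, ZMod.cast_id] at this
    exact sub_left_injective h2
  · intro t ht
    rw [Finset.mem_Ico] at ht
    have hdm : (σ i - i).val < m := ZMod.val_lt _
    have htm : t < m := lt_trans ht.2 hdm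
    have hval : ((t : ZMod m) - 0).val = t := by
      rw [sub_zero, ZMod.val_cast_of_lt htm]
    refine ⟨i + t, ?_, ?_⟩
    · simp only [Finset.mem_filter, Finset.mem_univ, true_and]
      constructor
      · intro h
        have : (t : ZMod m) = 0 := by
          have := congrArg (fun x => x - i) h
          simpa using this
        rw [this] at hval
        simp at hval
        omega
      · rw [add_sub_cancel_left, ZMod.val_cast_of_lt htm]; exact ht.2
    · rw [add_sub_cancel_left, ZMod.val_cast_of_lt htm]

lemma linked_parity (m : ℕ) [NeZero m] (σ : ZMod m → ZMod m)
    (hinv : ∀ k, σ (σ k) = k) (hfpf : ∀ k, σ k ≠ k) (i : ZMod m) :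
    Even (linkedCount m σ i) ↔ Odd ((σ i - i).val) := by
  set d := (σ i - i).val with hdd
  have hd : 1 ≤ d := by
    rw [Nat.one_le_iff_ne_zero, hdd]
    simp only [ne_eq, ZMod.val_eq_zero, sub_eq_zero]
    exact hfpf i
  set A := Finset.univ.filter (InsideArc m σ i) with hAdef
  have hA : A.card = d - 1 := card_inside m σ i
  have hsplit := Finset.card_filter_add_card_filter_not
    (s := A) (p := fun j => InsideArc m σ i (σ j))
  have hL : linkedCount m σ i = (A.filter fun j => ¬ InsideArc m σ i (σ j)).card := by
    rw [linkedCount, hAdef, Finset.filter_filter]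
  have hB : Even (A.filter fun j => InsideArc m σ i (σ j)).card := by
    apply even_card_invol σ
    · intro a ha
      simp only [hAdef, Finset.mem_filter, Finset.mem_univ, true_and] at ha ⊢
      exact ⟨ha.2, by rw [hinv a]; exact ha.1⟩
    · intro a _; exact hinv a
    · intro a _; exact hfpf a
  rw [Nat.even_iff] at hB
  rw [hL, Nat.even_iff, Nat.odd_iff]
  omega

/-- A Gauss diagram (a fixed-point-free involution `σ` on the `m`
points of a circle) corresponds to a framed 4-graph admitting a source-sink
orientation — equivalently, there is a sign function on the arcs of the circle
flipping exactly when passing a chord endpoint and taking opposite values at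
the two matched endpoints of each chord — if and only if every chord is even
(linked with an even number of other chords). -/
theorem stmt5 (m : ℕ) [NeZero m] (σ : ZMod m → ZMod m)
    (hinv : ∀ k, σ (σ k) = k) (hfpf : ∀ k, σ k ≠ k) :
    (∃ s : ZMod m → Bool, (∀ k, s (k + 1) = ! s k) ∧ (∀ i, s (σ i) = ! s i)) ↔
      ∀ i : ZMod m, Even (linkedCount m σ i) := by
  have hm2 : 2 ∣ m := by
    have := even_card_invol σ Finset.univ (by simp) (fun a _ => hinv a) (fun a _ => hfpf a)
    rw [Finset.card_univ, ZMod.card] at this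
    exact this.two_dvd
  obtain ⟨tt, htt⟩ := hm2
  have hmpos : 0 < m := Nat.pos_of_ne_zero (NeZero.ne m)
  have hm2' : (2 : ℕ) ∣ m := ⟨tt, htt⟩
  constructor
  · rintro ⟨s, hstep, hchord⟩ i
    rw [linked_parity m σ hinv hfpf i, parity_sub_val hm2']
    have key : ∀ n : ℕ, s ((n : ZMod m)) = xor (decide (n % 2 = 1)) (s 0) := by
      intro n
      induction n with
      | zero => simp
      | succ k ihk =>
        have hc : ((k + 1 : ℕ) : ZMod m) = (k : ZMod m) + 1 := by push_cast; ring
        rw [hc, hstep, ihk]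
        rcases Nat.mod_two_eq_zero_or_one k with h | h
        · have h1 : (k + 1) % 2 = 1 := by omega
          simp [h, h1]
        · have h1 : (k + 1) % 2 = 0 := by omega
          simp [h, h1]
    have keyx : ∀ x : ZMod m, s x = xor (decide (x.val % 2 = 1)) (s 0) := by
      intro x
      have := key x.val
      rwa [ZMod.natCast_val, ZMod.cast_id] at this
    have hx := hchord i
    rw [keyx (σ i), keyx i] at hx
    intro hcontra
    rw [hcontra] at hx
    exact absurd hx (by cases (decide (i.val % 2 = 1) ^^ s 0) <;> simp)
  · intro h
    have hodd : ∀ i, Odd ((σ i - i).val) :=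
      fun i => (linked_parity m σ hinv hfpf i).mp (h i)
    refine ⟨fun k => decide (k.val % 2 = 1), ?_, ?_⟩
    · intro k
      have hlt := ZMod.val_lt k
      have hv : (k + 1).val = (k.val + 1) % m := by
        rw [ZMod.val_add, ZMod.val_one_eq_one_mod, Nat.mod_eq_of_lt (by omega : 1 < m)]
      show decide ((k + 1).val % 2 = 1) = ! decide (k.val % 2 = 1)
      rw [hv, ← decide_not]
      apply decide_eq_decide.mpr
      rcases eq_or_lt_of_le (Nat.succ_le_of_lt hlt) with h' | h'
      · rw [show k.val + 1 = m from h', Nat.mod_self]; omega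
      · rw [Nat.mod_eq_of_lt h']; omega
    · intro i
      have := hodd i
      rw [parity_sub_val hm2'] at this
      show decide ((σ i).val % 2 = 1) = ! decide (i.val % 2 = 1)
      rw [← decide_not]
      apply decide_eq_decide.mpr
      omega
end

section
/- The graph on 7 vertices consisting of a 6-cycle together with one central vertex adjacent to all six cycle vertices (the wheel W6) is not a circle graph, i.e., it is not realizable as the interlacement graph of any chord diagram. -/
/-- Two chords (through the points `i` and `j`) are linked (interlaced):
exactly one of the endpoints `j`, `σ j` lies inside the arc from `i`
to `σ i`. -/
def LinkedChords (m : ℕ) (σ : ZMod m → ZMod m) (i j : ZMod m) : Prop :=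
  Xor' (InsideArc m σ i j) (InsideArc m σ i (σ j))

/-- Adjacency in the wheel `W₆` on `7` vertices: the hub `0` is adjacent to
all six rim vertices `1, …, 6`, which form a `6`-cycle. -/
def W6Adj (i j : Fin 7) : Prop :=
  i ≠ j ∧ (i = 0 ∨ j = 0 ∨ j.val = i.val % 6 + 1 ∨ i.val = j.val % 6 + 1)

/-!
Let `h` be an endpoint of the hub chord. Every rim chord crosses the hub, so it has one endpoint
`x` on the arc from `h` to `σ h` and the other endpoint `σ x` beyond it. Measuring positions from
`h`, two such chords interlace exactly when their inner endpoints and their outer endpoints come in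
the same order, so the rim `C₆` would be the comparability graph of the intersection of two linear
orders. In such a graph the middle vertex of an induced path on three vertices lies above both ends
or below both, so the orientation alternates around the cycle and the order is the standard example
`S₃`. Two of its three incomparable pairs would be reversed in the same linear order, which closes
a cycle in that order.
-/

open Function SimpleGraph

theorem ZMod.val_sub_eq_ite {n : ℕ} [NeZero n] (a b : ZMod n) :
    (a - b).val = if b.val ≤ a.val then a.val - b.val else n + a.val - b.val := by
  split_ifs with h
  · exact ZMod.val_sub h
  · have hsum : (a - b + b).val = a.val := by rw [sub_add_cancel]
    by_cases hn : n ≤ (a - b).val + b.val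
    · rw [ZMod.val_add_of_le hn] at hsum; omega
    · rw [ZMod.val_add_of_lt (not_le.1 hn)] at hsum; omega

section Chords

variable {m : ℕ} {σ : ZMod m → ZMod m}

def ChordsDisjoint (σ : ZMod m → ZMod m) (i j : ZMod m) : Prop :=
  j ≠ i ∧ j ≠ σ i ∧ σ j ≠ i ∧ σ j ≠ σ i

theorem insideArc_apply_iff_not [NeZero m] {i j : ZMod m} (hσi : σ (σ i) = i) (hi : σ i ≠ i)
    (hji : j ≠ i) (hjσi : j ≠ σ i) :
    InsideArc m σ (σ i) j ↔ ¬ InsideArc m σ i j := by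
  have hd : (σ i - i).val ≠ 0 := by simpa [sub_eq_zero] using hi
  have hu : (j - i).val ≠ 0 := by simpa [sub_eq_zero] using hji
  have hud : (j - i).val ≠ (σ i - i).val := fun h =>
    hjσi (by simpa using ZMod.val_injective _ h)
  unfold InsideArc
  rw [hσi, show j - σ i = (j - i) - (σ i - i) by ring, show i - σ i = 0 - (σ i - i) by ring,
    ZMod.val_sub_eq_ite (j - i), ZMod.val_sub_eq_ite 0, ZMod.val_zero]
  have := ZMod.val_lt (j - i)
  have := ZMod.val_lt (σ i - i)
  split_ifs <;> simp only [ne_eq, hjσi, hji, not_false_eq_true, true_and] <;> omega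

theorem linkedChords_apply_right {i j : ZMod m} (hσj : σ (σ j) = j) :
    LinkedChords m σ i (σ j) ↔ LinkedChords m σ i j := by
  unfold LinkedChords
  rw [hσj]
  exact iff_of_eq (xor_comm _ _)

theorem linkedChords_apply_left [NeZero m] {i j : ZMod m} (hσ : Involutive σ) (hi : σ i ≠ i)
    (hij : ChordsDisjoint σ i j) : LinkedChords m σ (σ i) j ↔ LinkedChords m σ i j := by
  obtain ⟨h1, h2, h3, h4⟩ := hij
  unfold LinkedChords
  rw [insideArc_apply_iff_not (hσ i) hi h1 h2, insideArc_apply_iff_not (hσ i) hi h3 h4]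
  exact xor_not_not

theorem ChordsDisjoint.of_endpoints {i j x y : ZMod m} (hσ : Involutive σ)
    (hx : x = i ∨ x = σ i) (hy : y = j ∨ y = σ j) (hij : ChordsDisjoint σ i j) :
    ChordsDisjoint σ x y := by
  obtain ⟨h1, h2, h3, h4⟩ := hij
  rcases hx with rfl | rfl <;> rcases hy with rfl | rfl <;>
    simp only [ChordsDisjoint, hσ _] <;> tauto

theorem linkedChords_congr_endpoints [NeZero m] {i j x y : ZMod m} (hσ : Involutive σ)
    (hi : σ i ≠ i) (hx : x = i ∨ x = σ i) (hy : y = j ∨ y = σ j)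
    (hij : ChordsDisjoint σ i j) : LinkedChords m σ x y ↔ LinkedChords m σ i j := by
  have hxj : LinkedChords m σ x y ↔ LinkedChords m σ x j := by
    rcases hy with rfl | rfl
    · rfl
    · exact linkedChords_apply_right (hσ j)
  rw [hxj]
  rcases hx with rfl | rfl
  · rfl
  · exact linkedChords_apply_left hσ hi hij

theorem LinkedChords.exists_straddle [NeZero m] {i j : ZMod m} (hσ : Involutive σ)
    (hij : ChordsDisjoint σ i j) (hl : LinkedChords m σ i j) :
    ∃ x, (x = j ∨ x = σ j) ∧
      (x - i).val < (σ i - i).val ∧ (σ i - i).val < (σ x - i).val := by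
  obtain ⟨h1, h2, h3, h4⟩ := hij
  have hne : ∀ z, z ≠ σ i → (z - i).val ≠ (σ i - i).val := fun z hz e =>
    hz (by simpa using ZMod.val_injective _ e)
  unfold LinkedChords InsideArc at hl
  rcases hl with ⟨⟨-, hin⟩, hout⟩ | ⟨⟨-, hin⟩, hout⟩
  · have := hne _ h4
    simp only [ne_eq, h3, not_false_eq_true, true_and, not_lt] at hout
    exact ⟨j, Or.inl rfl, hin, by omega⟩
  · have := hne _ h2
    simp only [ne_eq, h1, not_false_eq_true, true_and, not_lt] at hout
    exact ⟨σ j, Or.inr rfl, hin, by rw [hσ j]; omega⟩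

theorem linkedChords_iff_of_straddle [NeZero m] {h t x y : ZMod m} (hxy : x ≠ y)
    (hσxy : σ x ≠ σ y)
    (hx : (x - h).val < (t - h).val ∧ (t - h).val < (σ x - h).val)
    (hy : (y - h).val < (t - h).val ∧ (t - h).val < (σ y - h).val) :
    LinkedChords m σ x y ↔ ((x - h).val < (y - h).val ↔ (σ x - h).val < (σ y - h).val) := by
  have hval : ∀ z w : ZMod m, z ≠ w → (z - h).val ≠ (w - h).val := fun z w hzw e =>
    hzw (by simpa using ZMod.val_injective _ e)
  have h1 := hval _ _ hxy
  have h2 := hval _ _ hσxy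
  have hσyx : σ y ≠ x := fun e => by rw [e] at hy; omega
  have := ZMod.val_lt (σ y - h)
  have := ZMod.val_lt (σ x - h)
  unfold LinkedChords InsideArc
  refine xor_def.trans ?_
  rw [show y - x = (y - h) - (x - h) by ring, show σ y - x = (σ y - h) - (x - h) by ring,
    show σ x - x = (σ x - h) - (x - h) by ring, ZMod.val_sub_eq_ite (y - h),
    ZMod.val_sub_eq_ite (σ y - h), ZMod.val_sub_eq_ite (σ x - h)]
  simp only [ne_eq, hxy.symm, hσyx, not_false_eq_true, true_and]
  split_ifs <;> omega

end Chords

section TwoOrders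

variable {ι α : Type*} [LinearOrder α]

theorem twoOrders_not_standardExample_three (a b : ι → α) (x y : Fin 3 → ι)
    (hlt : ∀ i j, i ≠ j → a (x i) < a (y j) ∧ b (x i) < b (y j))
    (hinc : ∀ i, a (y i) < a (x i) ∨ b (y i) < b (x i)) : False := by
  -- two pairs reversed in the same coordinate give `y i < x i < y j < x j < y i` there
  obtain ⟨i, j, hij, hsame⟩ :=
    Fintype.exists_ne_map_eq_of_card_lt (fun i => decide (a (y i) < a (x i))) (by simp)
  by_cases hi : a (y i) < a (x i)
  · have hj : a (y j) < a (x j) := by simpa [hi] using hsame.symm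
    exact lt_irrefl _ (hi.trans <| (hlt i j hij).1.trans <| hj.trans (hlt j i hij.symm).1)
  · have hj : ¬ a (y j) < a (x j) := by simpa [hi] using hsame.symm
    have hbi := (hinc i).resolve_left hi
    have hbj := (hinc j).resolve_left hj
    exact lt_irrefl _ (hbi.trans <| (hlt i j hij).2.trans <| hbj.trans (hlt j i hij.symm).2)

/-- `G` is the comparability graph of the intersection of the orders pulled back along `a` and
`b`. -/
def SimpleGraph.IsSameOrderGraph (G : SimpleGraph ι) (a b : ι → α) : Prop :=
  Injective a ∧ Injective b ∧ ∀ i j, i ≠ j → (G.Adj i j ↔ (a i < a j ↔ b i < b j))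

namespace SimpleGraph.IsSameOrderGraph

variable {G : SimpleGraph ι} {a b : ι → α} {i j k : ι}

theorem lt_and_lt_or_lt_and_lt (hG : G.IsSameOrderGraph a b) (hij : G.Adj i j) :
    (a i < a j ∧ b i < b j) ∨ (a j < a i ∧ b j < b i) := by
  have hsame := (hG.2.2 i j hij.ne).1 hij
  rcases lt_or_gt_of_ne (hG.1.ne hij.ne) with h | h
  · exact Or.inl ⟨h, hsame.1 h⟩
  · exact Or.inr ⟨h, lt_of_le_of_ne (not_lt.1 (mt hsame.2 h.not_gt)) (hG.2.1.ne hij.ne.symm)⟩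

theorem lt_or_lt_of_not_adj (hG : G.IsSameOrderGraph a b) (hij : i ≠ j) (h : ¬ G.Adj i j) :
    a j < a i ∨ b j < b i := by
  by_contra! hle
  exact h <| (hG.2.2 i j hij).2 <| iff_of_true (lt_of_le_of_ne hle.1 (hG.1.ne hij))
    (lt_of_le_of_ne hle.2 (hG.2.1.ne hij))

theorem lt_and_lt_of_adj_of_not_adj (hG : G.IsSameOrderGraph a b) (h : a i < a j ∧ b i < b j)
    (hjk : G.Adj j k) (hik : ¬ G.Adj i k) (hne : i ≠ k) : a k < a j ∧ b k < b j := by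
  refine (hG.lt_and_lt_or_lt_and_lt hjk).resolve_left fun h' => hik ?_
  exact (hG.2.2 i k hne).2 (iff_of_true (h.1.trans h'.1) (h.2.trans h'.2))

theorem lt_and_lt_of_adj_of_not_adj' (hG : G.IsSameOrderGraph a b) (h : a j < a i ∧ b j < b i)
    (hjk : G.Adj j k) (hik : ¬ G.Adj i k) (hne : i ≠ k) : a j < a k ∧ b j < b k := by
  refine (hG.lt_and_lt_or_lt_and_lt hjk).resolve_right fun h' => hik ?_
  exact (hG.2.2 i k hne).2 (iff_of_false (h'.1.trans h.1).not_gt (h'.2.trans h.2).not_gt)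

theorem comp_iso {ι' : Type*} {G' : SimpleGraph ι'} (hG : G.IsSameOrderGraph a b)
    (e : G' ≃g G) :
    G'.IsSameOrderGraph (a ∘ e) (b ∘ e) :=
  ⟨hG.1.comp e.injective, hG.2.1.comp e.injective, fun _ _ hij =>
    e.map_adj_iff.symm.trans (hG.2.2 _ _ (e.injective.ne hij))⟩

end SimpleGraph.IsSameOrderGraph

def cycleGraphRotate (n : ℕ) : cycleGraph (n + 2) ≃g cycleGraph (n + 2) :=
  ⟨Equiv.addRight 1, by simp [cycleGraph_adj]⟩

theorem not_isSameOrderGraph_cycleGraph_six (a b : Fin 6 → α) :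
    ¬ (cycleGraph 6).IsSameOrderGraph a b := by
  intro hG
  wlog h01 : a 0 < a 1 ∧ b 0 < b 1 generalizing a b
  · have h10 := (hG.lt_and_lt_or_lt_and_lt (by decide)).resolve_left h01
    exact this _ _ (hG.comp_iso (cycleGraphRotate 4))
      (hG.lt_and_lt_of_adj_of_not_adj' h10 (by decide) (by decide) (by decide))
  have h21 := hG.lt_and_lt_of_adj_of_not_adj h01 (k := 2) (by decide) (by decide) (by decide)
  have h23 := hG.lt_and_lt_of_adj_of_not_adj' h21 (k := 3) (by decide) (by decide) (by decide)
  have h43 := hG.lt_and_lt_of_adj_of_not_adj h23 (k := 4) (by decide) (by decide) (by decide)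
  have h45 := hG.lt_and_lt_of_adj_of_not_adj' h43 (k := 5) (by decide) (by decide) (by decide)
  have h05 := hG.lt_and_lt_of_adj_of_not_adj h45 (k := 0) (by decide) (by decide) (by decide)
  -- `0, 2, 4` are minimal, each below every maximum except its antipode
  refine twoOrders_not_standardExample_three a b ![0, 2, 4] ![3, 5, 1] ?_ fun i => ?_
  · intro i j hij
    fin_cases i <;> fin_cases j <;> first | exact absurd rfl hij | assumption
  · fin_cases i <;> exact hG.lt_or_lt_of_not_adj (by decide) (by decide)

end TwoOrders

theorem w6Adj_succ_succ_iff (k l : Fin 6) : W6Adj k.succ l.succ ↔ (cycleGraph 6).Adj k l := by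
  revert k l
  unfold W6Adj
  decide

/-- The wheel `W₆` (a 6-cycle plus a central vertex adjacent to
all six cycle vertices) is not a circle graph: there is no chord diagram — no
fixed-point-free involution `σ` on the `14` points of a circle — whose seven
chords, listed by a system `f` of representative endpoints, have interlacement
graph isomorphic to `W₆`. -/
theorem stmt14 :
    ¬ ∃ (σ : ZMod 14 → ZMod 14) (f : Fin 7 → ZMod 14),
      (∀ k, σ (σ k) = k) ∧ (∀ k, σ k ≠ k) ∧
      (∀ i j : Fin 7, i ≠ j → f i ≠ f j ∧ f i ≠ σ (f j)) ∧
      (∀ i j : Fin 7, i ≠ j →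
        (W6Adj i j ↔ LinkedChords 14 σ (f i) (f j))) := by
  rintro ⟨σ, f, hσ : Involutive σ, hfix, hd, hW⟩
  have hdisj : ∀ i j, i ≠ j → ChordsDisjoint σ (f i) (f j) := fun i j hij =>
    ⟨(hd j i hij.symm).1, (hd j i hij.symm).2, (hd i j hij).2.symm,
      hσ.injective.ne (hd j i hij.symm).1⟩
  have hrim (k : Fin 6) := (hW 0 k.succ k.succ_ne_zero.symm).1
    ⟨k.succ_ne_zero.symm, Or.inl rfl⟩ |>.exists_straddle hσ (hdisj _ _ k.succ_ne_zero.symm)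
  choose x hxf hx using hrim
  have hxdisj : ∀ k l, k ≠ l → ChordsDisjoint σ (x k) (x l) := fun k l hkl =>
    (hdisj _ _ (Fin.succ_injective _ |>.ne hkl)).of_endpoints hσ (hxf k) (hxf l)
  have hval : ∀ z w : ZMod 14, (z - f 0).val = (w - f 0).val → z = w := fun z w e => by
    simpa using ZMod.val_injective _ e
  refine not_isSameOrderGraph_cycleGraph_six (fun k => (x k - f 0).val)
    (fun k => (σ (x k) - f 0).val) ⟨fun k l e => ?_, fun k l e => ?_, fun k l hkl => ?_⟩
  · by_contra hkl; exact (hxdisj k l hkl).1 (hval _ _ e).symm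
  · by_contra hkl; exact (hxdisj k l hkl).2.2.2 (hval _ _ e).symm
  · rw [← w6Adj_succ_succ_iff, hW _ _ (Fin.succ_injective _ |>.ne hkl),
      ← linkedChords_congr_endpoints hσ (hfix _) (hxf k) (hxf l)
        (hdisj _ _ (Fin.succ_injective _ |>.ne hkl)),
      linkedChords_iff_of_straddle (hxdisj k l hkl).1.symm (hxdisj k l hkl).2.2.2.symm
        (hx k) (hx l)]
end
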